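/- arXiv:2010.11023 — 7 statements merged into one kernel-verified Lean document; each statement's English description precedes it below -/
import Mathlib

section
/- Let G be a finite simple connected graph and let G' be obtained from G by adding an edge e between two non-adjacent vertices E and F. If two vertices A and B both lie in the special region R_E, or both lie in the special region R_F, then d_{G'}(A,B) = d_G(A,B); equivalently, B ∉ R_A and A ∉ R_B. -/
/-- The special region of `A`: vertices whose distance to `A` decreased from `G` to `G'`. -/
def specialRegion {V : Type*} (G G' : SimpleGraph V) (A : V) : Set V :=
  {Z | G'.dist Z A < G.dist Z A}

/-- Lower bound on walk lengths in the augmented graph. -/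
lemma key_walk {V : Type*} (G : SimpleGraph V) (hconn : G.Connected)
    (E F : V) (G' : SimpleGraph V) (hG' : G' = G ⊔ SimpleGraph.fromEdgeSet {s(E, F)})
    {x y : V} (p : G'.Walk x y) :
    G.dist x y ≤ p.length ∨ G.dist x E + 1 + G.dist F y ≤ p.length ∨
      G.dist x F + 1 + G.dist E y ≤ p.length := by
  induction p with
  | nil => left; simp [SimpleGraph.dist_self]
  | @cons a b c hab q ih =>
    rw [hG', SimpleGraph.sup_adj, SimpleGraph.fromEdgeSet_adj, Set.mem_singleton_iff,
      Sym2.eq_iff] at hab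
    rw [SimpleGraph.Walk.length_cons]
    rcases hab with hab | ⟨(⟨rfl, rfl⟩ | ⟨rfl, rfl⟩), hne⟩
    · have h1 : G.dist a b ≤ 1 := by
        have := G.dist_le hab.toWalk
        simpa using this
      rcases ih with ih | ih | ih
      · left
        have := hconn.dist_triangle (u := a) (v := b) (w := c)
        omega
      · right; left
        have := hconn.dist_triangle (u := a) (v := b) (w := E)
        omega
      · right; right
        have := hconn.dist_triangle (u := a) (v := b) (w := F)
        omega
    · -- a = E, b = F
      rcases ih with ih | ih | ih
      · right; left; simp [SimpleGraph.dist_self]; omega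
      · right; left; simp [SimpleGraph.dist_self]; omega
      · left
        have h0 : G.dist b b = 0 := SimpleGraph.dist_self
        omega
    · -- a = F, b = E
      rcases ih with ih | ih | ih
      · right; right; simp [SimpleGraph.dist_self]; omega
      · left
        have h0 : G.dist b b = 0 := SimpleGraph.dist_self
        omega
      · right; right; simp [SimpleGraph.dist_self]; omega

lemma key_dist {V : Type*} (G : SimpleGraph V) (hconn : G.Connected)
    (E F : V) (G' : SimpleGraph V) (hG' : G' = G ⊔ SimpleGraph.fromEdgeSet {s(E, F)})
    (x y : V) :
    G.dist x y ≤ G'.dist x y ∨ G.dist x E + 1 + G.dist F y ≤ G'.dist x y ∨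
      G.dist x F + 1 + G.dist E y ≤ G'.dist x y := by
  have hle : G ≤ G' := by rw [hG']; exact le_sup_left
  have hconn' : G'.Connected := hconn.mono hle
  obtain ⟨p, hp⟩ := (hconn' x y).exists_walk_length_eq_dist
  rw [← hp]
  exact key_walk G hconn E F G' hG' p

lemma dist_le_dist {V : Type*} (G : SimpleGraph V) (hconn : G.Connected)
    (G' : SimpleGraph V) (hle : G ≤ G') (x y : V) : G'.dist x y ≤ G.dist x y := by
  obtain ⟨p, hp⟩ := (hconn x y).exists_walk_length_eq_dist
  calc G'.dist x y ≤ (p.mapLe hle).length := G'.dist_le _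
    _ = p.length := SimpleGraph.Walk.length_map _ _
    _ = G.dist x y := hp

/-- From membership in the special region of `E` extract the distance inequality. -/
lemma region_ineq {V : Type*} (G : SimpleGraph V) (hconn : G.Connected)
    (E F : V) (G' : SimpleGraph V) (hG' : G' = G ⊔ SimpleGraph.fromEdgeSet {s(E, F)})
    {A : V} (hA : A ∈ specialRegion G G' E) : G.dist A F + 1 < G.dist A E := by
  have hlt : G'.dist A E < G.dist A E := hA
  rcases key_dist G hconn E F G' hG' A E with h | h | h
  · omega
  · have h0 : G.dist F E ≥ 0 := Nat.zero_le _
    omega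
  · have h0 : G.dist E E = 0 := SimpleGraph.dist_self
    omega

lemma main_case {V : Type*} (G : SimpleGraph V) (hconn : G.Connected)
    (E F : V) (G' : SimpleGraph V) (hG' : G' = G ⊔ SimpleGraph.fromEdgeSet {s(E, F)})
    {A B : V} (hA : A ∈ specialRegion G G' E) (hB : B ∈ specialRegion G G' E) :
    G'.dist A B = G.dist A B := by
  have hle : G ≤ G' := by rw [hG']; exact le_sup_left
  have hub := dist_le_dist G hconn G' hle A B
  have hA' := region_ineq G hconn E F G' hG' hA
  have hB' := region_ineq G hconn E F G' hG' hB
  have htri : G.dist A B ≤ G.dist A F + G.dist F B := hconn.dist_triangle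
  have hcFB : G.dist F B = G.dist B F := SimpleGraph.dist_comm
  have hcEB : G.dist E B = G.dist B E := SimpleGraph.dist_comm
  rcases key_dist G hconn E F G' hG' A B with h | h | h <;> omega


/-- Claim 2: if `A` and `B` both lie in the special region `R_E`, or both lie in the
special region `R_F`, then `d_{G'}(A,B) = d_G(A,B)`; equivalently `B ∉ R_A` and
`A ∉ R_B`. -/
theorem stmt_1 {V : Type*} [Fintype V] (G : SimpleGraph V) (hconn : G.Connected)
    (E F : V) (hne : E ≠ F) (hadj : ¬ G.Adj E F)
    (G' : SimpleGraph V) (hG' : G' = G ⊔ SimpleGraph.fromEdgeSet {s(E, F)})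
    (A B : V)
    (h : (A ∈ specialRegion G G' E ∧ B ∈ specialRegion G G' E) ∨
         (A ∈ specialRegion G G' F ∧ B ∈ specialRegion G G' F)) :
    G'.dist A B = G.dist A B ∧
    B ∉ specialRegion G G' A ∧ A ∉ specialRegion G G' B := by
  have hG'' : G' = G ⊔ SimpleGraph.fromEdgeSet {s(F, E)} := by
    rw [hG', Sym2.eq_swap]
  have heq : G'.dist A B = G.dist A B := by
    rcases h with ⟨hA, hB⟩ | ⟨hA, hB⟩
    · exact main_case G hconn E F G' hG' hA hB
    · exact main_case G hconn F E G' hG'' hA hB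
  refine ⟨heq, ?_, ?_⟩
  · intro hB
    have hlt : G'.dist B A < G.dist B A := hB
    rw [SimpleGraph.dist_comm (u := B), SimpleGraph.dist_comm (u := B)] at hlt
    omega
  · intro hA
    have hlt : G'.dist A B < G.dist A B := hA
    omega
end

section
/- Let G be a finite simple connected graph and let G' be obtained from G by adding an edge e between two non-adjacent vertices E and F. For every vertex A in the special region R_F, one has F ∈ R_A and R_A ⊆ R_E; symmetrically, for every vertex B in the special region R_E, one has E ∈ R_B and R_B ⊆ R_F. -/
section Aux

variable {V : Type*} [Fintype V]

private lemma le_sup' (G : SimpleGraph V) (E F : V) :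
    G ≤ G ⊔ SimpleGraph.fromEdgeSet {s(E, F)} := le_sup_left

private lemma adj_EF' (G : SimpleGraph V) (E F : V) (hne : E ≠ F) :
    (G ⊔ SimpleGraph.fromEdgeSet {s(E, F)}).Adj E F := by
  right
  simp [SimpleGraph.fromEdgeSet_adj, hne]

/-- Lower bound: every walk in `G'` has length at least the min of the direct distance and
the two shortcut distances through the new edge. -/
private lemma walk_lb (G : SimpleGraph V) (hconn : G.Connected) (E F : V)
    {X Y : V} (w : (G ⊔ SimpleGraph.fromEdgeSet {s(E, F)}).Walk X Y) :
    min (G.dist X Y) (min (G.dist X E + 1 + G.dist F Y) (G.dist X F + 1 + G.dist E Y))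
      ≤ w.length := by
  induction w with
  | nil => simp
  | @cons X X' Y h w' ih =>
    rcases h with h | h
    · -- G-edge
      have h1 : G.dist X X' ≤ 1 := by
        simpa using G.dist_le (SimpleGraph.Walk.cons h SimpleGraph.Walk.nil)
      have t1 : G.dist X Y ≤ G.dist X X' + G.dist X' Y := hconn.dist_triangle
      have t2 : G.dist X E ≤ G.dist X X' + G.dist X' E := hconn.dist_triangle
      have t3 : G.dist X F ≤ G.dist X X' + G.dist X' F := hconn.dist_triangle
      simp only [min_le_iff, SimpleGraph.Walk.length_cons] at ih ⊢
      omega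
    · -- new edge
      rw [SimpleGraph.fromEdgeSet_adj, Set.mem_singleton_iff, Sym2.eq_iff] at h
      have hcomm : G.dist X X' = G.dist X' X := G.dist_comm
      obtain ⟨(⟨h1, h2⟩ | ⟨h1, h2⟩), -⟩ := h
      · have e1 : G.dist X E = 0 := by rw [h1, SimpleGraph.dist_self]
        have e2 : G.dist F Y = G.dist X' Y := by rw [h2]
        have e3 : G.dist X' E = G.dist X X' := by rw [h1]; exact G.dist_comm
        have e4 : G.dist X' F = 0 := by rw [h2, SimpleGraph.dist_self]
        have e5 : G.dist E Y = G.dist X Y := by rw [h1]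
        have e6 : G.dist X F = G.dist X X' := by rw [h2]
        simp only [min_le_iff, SimpleGraph.Walk.length_cons] at ih ⊢
        omega
      · have e1 : G.dist X F = 0 := by rw [h1, SimpleGraph.dist_self]
        have e2 : G.dist E Y = G.dist X' Y := by rw [h2]
        have e3 : G.dist X' F = G.dist X X' := by rw [h1]; exact G.dist_comm
        have e4 : G.dist X' E = 0 := by rw [h2, SimpleGraph.dist_self]
        have e5 : G.dist F Y = G.dist X Y := by rw [h1]
        have e6 : G.dist X E = G.dist X X' := by rw [h2]
        simp only [min_le_iff, SimpleGraph.Walk.length_cons] at ih ⊢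
        omega

/-- Distance in `G'` is bounded above by distance in `G`. -/
private lemma dist'_le (G : SimpleGraph V) (hconn : G.Connected) (E F : V) (X Y : V) :
    (G ⊔ SimpleGraph.fromEdgeSet {s(E, F)}).dist X Y ≤ G.dist X Y := by
  obtain ⟨p, hp⟩ := hconn.exists_walk_length_eq_dist X Y
  calc (G ⊔ SimpleGraph.fromEdgeSet {s(E, F)}).dist X Y
      ≤ (p.mapLe (le_sup' G E F)).length := SimpleGraph.dist_le _
    _ = G.dist X Y := by simpa using hp

/-- Upper bound through the new edge: `d'(X, E) ≤ d(X, F) + 1`. -/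
private lemma dist'_shortcut (G : SimpleGraph V) (hconn : G.Connected) (E F : V)
    (hne : E ≠ F) (X : V) :
    (G ⊔ SimpleGraph.fromEdgeSet {s(E, F)}).dist X E ≤ G.dist X F + 1 := by
  obtain ⟨p, hp⟩ := hconn.exists_walk_length_eq_dist X F
  have hFE : (G ⊔ SimpleGraph.fromEdgeSet {s(E, F)}).Adj F E := (adj_EF' G E F hne).symm
  have := SimpleGraph.dist_le
    ((p.mapLe (le_sup' G E F)).append (SimpleGraph.Walk.cons hFE SimpleGraph.Walk.nil))
  simpa [hp] using this

/-- Key one-sided lemma. -/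
private lemma key (G : SimpleGraph V) (hconn : G.Connected)
    (E F : V) (hne : E ≠ F)
    (G' : SimpleGraph V) (hG' : G' = G ⊔ SimpleGraph.fromEdgeSet {s(E, F)}) :
    ∀ A ∈ specialRegion G G' F,
      F ∈ specialRegion G G' A ∧ specialRegion G G' A ⊆ specialRegion G G' E := by
  subst hG'
  intro A hA
  have hAF : (G ⊔ SimpleGraph.fromEdgeSet {s(E, F)}).dist A F < G.dist A F := hA
  -- Step 1: d(A,E) + 1 < d(A,F)
  obtain ⟨p, hp⟩ := ((hconn.mono (le_sup' G E F)) A F).exists_walk_length_eq_dist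
  have hlb := walk_lb G hconn E F p
  rw [hp] at hlb
  have hstep1 : G.dist A E + 1 < G.dist A F := by
    have h0 : G.dist F F = 0 := SimpleGraph.dist_self
    simp only [min_le_iff, h0] at hlb
    omega
  constructor
  · -- F ∈ R_A by symmetry of dist
    show (G ⊔ SimpleGraph.fromEdgeSet {s(E, F)}).dist F A < G.dist F A
    rwa [SimpleGraph.dist_comm (G := G ⊔ SimpleGraph.fromEdgeSet {s(E, F)}),
      SimpleGraph.dist_comm (G := G)]
  · intro Z hZ
    have hZA : (G ⊔ SimpleGraph.fromEdgeSet {s(E, F)}).dist Z A < G.dist Z A := hZ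
    obtain ⟨q, hq⟩ := ((hconn.mono (le_sup' G E F)) Z A).exists_walk_length_eq_dist
    have hlb2 := walk_lb G hconn E F q
    rw [hq] at hlb2
    have ht1 : G.dist Z A ≤ G.dist Z E + G.dist E A := hconn.dist_triangle
    have hcEA : G.dist E A = G.dist A E := G.dist_comm
    have hcFA : G.dist F A = G.dist A F := G.dist_comm
    -- derive b + 1 < a where a = d(Z,E), b = d(Z,F)
    have hba : G.dist Z F + 1 < G.dist Z E := by
      simp only [min_le_iff, hcEA, hcFA] at hlb2
      omega
    show (G ⊔ SimpleGraph.fromEdgeSet {s(E, F)}).dist Z E < G.dist Z E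
    calc (G ⊔ SimpleGraph.fromEdgeSet {s(E, F)}).dist Z E
        ≤ G.dist Z F + 1 := dist'_shortcut G hconn E F hne Z
      _ < G.dist Z E := hba

end Aux

/-- Remark (structure of special regions): for every `A ∈ R_F` we have `F ∈ R_A` and
`R_A ⊆ R_E`; symmetrically, for every `B ∈ R_E` we have `E ∈ R_B` and `R_B ⊆ R_F`. -/
theorem stmt_2 {V : Type*} [Fintype V] (G : SimpleGraph V) (hconn : G.Connected)
    (E F : V) (hne : E ≠ F) (hadj : ¬ G.Adj E F)
    (G' : SimpleGraph V) (hG' : G' = G ⊔ SimpleGraph.fromEdgeSet {s(E, F)}) :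
    (∀ A ∈ specialRegion G G' F,
      F ∈ specialRegion G G' A ∧ specialRegion G G' A ⊆ specialRegion G G' E) ∧
    (∀ B ∈ specialRegion G G' E,
      E ∈ specialRegion G G' B ∧ specialRegion G G' B ⊆ specialRegion G G' F) := by
  have hG'' : G' = G ⊔ SimpleGraph.fromEdgeSet {s(F, E)} := by
    rwa [Sym2.eq_swap]
  exact ⟨key G hconn E F hne G' hG', key G hconn F E hne.symm G' hG''⟩
end

section
/- Let G be a finite simple connected graph and let G' be obtained from G by adding an edge e between two non-adjacent vertices E and F. For any vertices A, B: if A ∈ R_B and A ∈ R_F then d_{G'}(A,B) = d_G(A,E) + 1 + d_G(F,B); if A ∈ R_B and A ∈ R_E then d_{G'}(A,B) = d_G(A,F) + 1 + d_G(E,B); and if A ∉ R_B then d_{G'}(A,B) = d_G(A,B). -/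
open SimpleGraph

private lemma dist_mono' {V : Type*} {G G' : SimpleGraph V} {u v : V} (hle : G ≤ G')
    (hr : G.Reachable u v) : G'.dist u v ≤ G.dist u v := by
  obtain ⟨p, hp⟩ := hr.exists_walk_length_eq_dist
  calc G'.dist u v ≤ (p.mapLe hle).length := SimpleGraph.dist_le _
    _ = G.dist u v := by simpa using hp

/-- Any walk in `G'` has length at least one of the three candidate values. -/
private lemma key_lemma {V : Type*} {G G' : SimpleGraph V} {E F : V}
    (hconn : G.Connected)
    (hA : ∀ ⦃x y : V⦄, G'.Adj x y → G.Adj x y ∨ (x = E ∧ y = F) ∨ (x = F ∧ y = E)) :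
    ∀ {X Y : V} (p : G'.Walk X Y),
      G.dist X Y ≤ p.length ∨ G.dist X E + 1 + G.dist F Y ≤ p.length ∨
        G.dist X F + 1 + G.dist E Y ≤ p.length := by
  intro X Y p
  induction p with
  | nil => left; simp
  | @cons X Z Y h q ih =>
    have hlen : (SimpleGraph.Walk.cons h q).length = q.length + 1 := by simp
    rcases hA h with hg | ⟨hx, hz⟩ | ⟨hx, hz⟩
    · have hXZ : G.dist X Z = 1 := SimpleGraph.dist_eq_one_iff_adj.mpr hg
      rcases ih with h1 | h2 | h3
      · left
        have := hconn.dist_triangle (u := X) (v := Z) (w := Y)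
        omega
      · right; left
        have := hconn.dist_triangle (u := X) (v := Z) (w := E)
        have := hconn.dist_triangle (u := Z) (v := X) (w := E)
        omega
      · right; right
        have := hconn.dist_triangle (u := X) (v := Z) (w := F)
        omega
    · -- X = E, Z = F
      have e1 : G.dist X E = 0 := by rw [hx, SimpleGraph.dist_self]
      have e2 : G.dist Z Y = G.dist F Y := by rw [hz]
      have e3 : G.dist Z F = 0 := by rw [hz, SimpleGraph.dist_self]
      have e5 : G.dist X Y = G.dist E Y := by rw [hx]
      rcases ih with h1 | h2 | h3
      · right; left; omega
      · right; left; omega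
      · left; omega
    · -- X = F, Z = E
      have e1 : G.dist X F = 0 := by rw [hx, SimpleGraph.dist_self]
      have e2 : G.dist Z Y = G.dist E Y := by rw [hz]
      have e3 : G.dist Z E = 0 := by rw [hz, SimpleGraph.dist_self]
      have e5 : G.dist X Y = G.dist F Y := by rw [hx]
      rcases ih with h1 | h2 | h3
      · right; right; omega
      · left; omega
      · right; right; omega

/-- Upper bound: `d'(X,Y) ≤ d(X,E) + 1 + d(F,Y)`. -/
private lemma upper_lemma {V : Type*} {G G' : SimpleGraph V} {E F : V}
    (hconn : G.Connected) (hle : G ≤ G') (hEF : G'.Adj E F) (X Y : V) :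
    G'.dist X Y ≤ G.dist X E + 1 + G.dist F Y := by
  obtain ⟨p, hp⟩ := (hconn X E).exists_walk_length_eq_dist
  obtain ⟨q, hq⟩ := (hconn F Y).exists_walk_length_eq_dist
  have := SimpleGraph.dist_le ((p.mapLe hle).append (SimpleGraph.Walk.cons hEF (q.mapLe hle)))
  simp only [SimpleGraph.Walk.length_append, SimpleGraph.Walk.length_cons,
    SimpleGraph.Walk.length_map] at this
  omega

/-- The main asymmetric claim. -/
private lemma main_aux {V : Type*} {G G' : SimpleGraph V} {E F : V}
    (hconn : G.Connected) (hle : G ≤ G') (hEF : G'.Adj E F)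
    (hA : ∀ ⦃x y : V⦄, G'.Adj x y → G.Adj x y ∨ (x = E ∧ y = F) ∨ (x = F ∧ y = E))
    (A B : V) (hAB : G'.dist A B < G.dist A B) (hAF : G'.dist A F < G.dist A F) :
    G'.dist A B = G.dist A E + 1 + G.dist F B := by
  have hconn' : G'.Connected := hconn.mono hle
  -- step 1 : d(A,E) + 1 < d(A,F)
  obtain ⟨p, hp⟩ := (hconn' A F).exists_walk_length_eq_dist
  have h1 : G.dist A E + 1 < G.dist A F := by
    rcases key_lemma hconn hA p with h | h | h
    · omega
    · have hFF : G.dist F F = 0 := SimpleGraph.dist_self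
      omega
    · have hFF : G.dist F F = 0 := SimpleGraph.dist_self
      omega
  -- step 2
  obtain ⟨q, hq⟩ := (hconn' A B).exists_walk_length_eq_dist
  have hub := upper_lemma hconn hle hEF A B
  rcases key_lemma hconn hA q with h | h | h
  · omega
  · omega
  · exfalso
    have htri := hconn.dist_triangle (u := A) (v := E) (w := B)
    omega

/-- Claim 3 (exact distances in `G'`): for any vertices `A`, `B`:
if `A ∈ R_B` and `A ∈ R_F` then `d_{G'}(A,B) = d_G(A,E) + 1 + d_G(F,B)`;
if `A ∈ R_B` and `A ∈ R_E` then `d_{G'}(A,B) = d_G(A,F) + 1 + d_G(E,B)`;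
and if `A ∉ R_B` then `d_{G'}(A,B) = d_G(A,B)`. -/
theorem stmt_3 {V : Type*} [Fintype V] (G : SimpleGraph V) (hconn : G.Connected)
    (E F : V) (hne : E ≠ F) (hadj : ¬ G.Adj E F)
    (G' : SimpleGraph V) (hG' : G' = G ⊔ SimpleGraph.fromEdgeSet {s(E, F)}) :
    ∀ A B : V,
      (A ∈ specialRegion G G' B → A ∈ specialRegion G G' F →
        G'.dist A B = G.dist A E + 1 + G.dist F B) ∧
      (A ∈ specialRegion G G' B → A ∈ specialRegion G G' E →
        G'.dist A B = G.dist A F + 1 + G.dist E B) ∧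
      (A ∉ specialRegion G G' B → G'.dist A B = G.dist A B) := by
  have hle : G ≤ G' := by rw [hG']; exact le_sup_left
  have hEF : G'.Adj E F := by
    rw [hG']
    right
    rw [SimpleGraph.fromEdgeSet_adj]
    exact ⟨Set.mem_singleton _, hne⟩
  have hA : ∀ ⦃x y : V⦄, G'.Adj x y → G.Adj x y ∨ (x = E ∧ y = F) ∨ (x = F ∧ y = E) := by
    intro x y h
    rw [hG'] at h
    rcases h with h | h
    · exact Or.inl h
    · rw [SimpleGraph.fromEdgeSet_adj, Set.mem_singleton_iff, Sym2.eq_iff] at h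
      tauto
  have hA' : ∀ ⦃x y : V⦄, G'.Adj x y → G.Adj x y ∨ (x = F ∧ y = E) ∨ (x = E ∧ y = F) := by
    intro x y h; rcases hA h with h | h | h <;> tauto
  intro A B
  refine ⟨fun hB hF => ?_, fun hB hE => ?_, fun hB => ?_⟩
  · exact main_aux hconn hle hEF hA A B hB hF
  · exact main_aux hconn hle hEF.symm hA' A B hB hE
  · simp only [specialRegion, Set.mem_setOf_eq, not_lt] at hB
    exact le_antisymm (dist_mono' hle (hconn A B)) hB
end

section
/- Let G be a finite simple connected graph and let G' be obtained from G by adding an edge e between two non-adjacent vertices E and F. For every vertex A, the maximum gain satisfies Gain_max(A) = max(0, |d_G(A,F) − d_G(A,E)| − 1). In particular, A lies in the normal region N if and only if Gain_max(A) = 0, and if A ∈ R_E then Gain_max(A) = Gain(A,E) = d_G(A,E) − (1 + d_G(A,F)). -/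
/-- The normal region: vertices with empty special region. -/
def normalRegion {V : Type*} (G G' : SimpleGraph V) : Set V :=
  {Z | specialRegion G G' Z = ∅}

/-- The gain of the pair `(A,B)`: the decrease in distance due to the extra edge. -/
noncomputable def gain {V : Type*} (G G' : SimpleGraph V) (A B : V) : ℤ :=
  (G.dist A B : ℤ) - (G'.dist A B : ℤ)

/-- The maximum gain associated to a vertex `A`. -/
noncomputable def gainMax {V : Type*} [Fintype V] [Nonempty V]
    (G G' : SimpleGraph V) (A : V) : ℤ :=
  Finset.univ.sup' Finset.univ_nonempty (fun X => gain G G' A X)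

section aux

variable {V : Type*} {G : SimpleGraph V} {E F : V}

private lemma walk_cases (hconn : G.Connected)
    {X Y : V} (p : (G ⊔ SimpleGraph.fromEdgeSet {s(E, F)}).Walk X Y) :
    G.dist X Y ≤ p.length ∨ G.dist X E + 1 + G.dist F Y ≤ p.length ∨
      G.dist X F + 1 + G.dist E Y ≤ p.length := by
  induction p with
  | nil => left; simp [SimpleGraph.dist_self]
  | @cons X W Y h q ih =>
    rw [SimpleGraph.Walk.length_cons]
    rcases h with h | h
    · -- G.Adj X W
      have hXW : G.dist X W = 1 := SimpleGraph.dist_eq_one_iff_adj.mpr h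
      rcases ih with h1 | h1 | h1
      · left
        have := hconn.dist_triangle (u := X) (v := W) (w := Y)
        omega
      · right; left
        have := hconn.dist_triangle (u := X) (v := W) (w := E)
        omega
      · right; right
        have := hconn.dist_triangle (u := X) (v := W) (w := F)
        omega
    · -- the new edge
      rw [SimpleGraph.fromEdgeSet_adj, Set.mem_singleton_iff, Sym2.eq_iff] at h
      rcases h.1 with ⟨hX, hW⟩ | ⟨hX, hW⟩
      · subst hX; subst hW
        rcases ih with h1 | h1 | h1
        · right; left; simp [SimpleGraph.dist_self]; omega
        · right; left; simp [SimpleGraph.dist_self]; omega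
        · left
          rw [SimpleGraph.dist_self] at h1
          omega
      · subst hX; subst hW
        rcases ih with h1 | h1 | h1
        · right; right; simp [SimpleGraph.dist_self]; omega
        · left
          rw [SimpleGraph.dist_self] at h1
          omega
        · right; right; simp [SimpleGraph.dist_self]; omega

private lemma dist'_eq (hconn : G.Connected) (hne : E ≠ F) (X Y : V) :
    (G ⊔ SimpleGraph.fromEdgeSet {s(E, F)}).dist X Y =
      min (G.dist X Y) (min (G.dist X E + 1 + G.dist F Y) (G.dist X F + 1 + G.dist E Y)) := by
  set G' := G ⊔ SimpleGraph.fromEdgeSet {s(E, F)} with hG'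
  have hle : G ≤ G' := le_sup_left
  have hEF : G'.Adj E F := by
    right
    rw [SimpleGraph.fromEdgeSet_adj]
    exact ⟨Set.mem_singleton _, hne⟩
  have hconn' : G'.Connected := hconn.mono hle
  apply le_antisymm
  · apply le_min
    · obtain ⟨p, hp⟩ := hconn.exists_walk_length_eq_dist X Y
      have := SimpleGraph.dist_le (p.mapLe hle)
      simpa [hp] using this
    apply le_min
    · obtain ⟨p, hp⟩ := hconn.exists_walk_length_eq_dist X E
      obtain ⟨q, hq⟩ := hconn.exists_walk_length_eq_dist F Y
      have := SimpleGraph.dist_le (((p.mapLe hle).concat hEF).append (q.mapLe hle))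
      simp [SimpleGraph.Walk.length_concat, hp, hq] at this
      omega
    · obtain ⟨p, hp⟩ := hconn.exists_walk_length_eq_dist X F
      obtain ⟨q, hq⟩ := hconn.exists_walk_length_eq_dist E Y
      have := SimpleGraph.dist_le (((p.mapLe hle).concat hEF.symm).append (q.mapLe hle))
      simp [SimpleGraph.Walk.length_concat, hp, hq] at this
      omega
  · obtain ⟨p, hp⟩ := hconn'.exists_walk_length_eq_dist X Y
    rcases walk_cases hconn p with h | h | h <;> rw [hp] at h <;> omega

end aux

/-- Remark 3: for every vertex `A`, `Gain_max(A) = max(0, |d_G(A,F) − d_G(A,E)| − 1)`;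
in particular `A ∈ N` iff `Gain_max(A) = 0`, and if `A ∈ R_E` then
`Gain_max(A) = Gain(A,E) = d_G(A,E) − (1 + d_G(A,F))`. -/
theorem stmt_4 {V : Type*} [Fintype V] [Nonempty V] (G : SimpleGraph V) (hconn : G.Connected)
    (E F : V) (hne : E ≠ F) (hadj : ¬ G.Adj E F)
    (G' : SimpleGraph V) (hG' : G' = G ⊔ SimpleGraph.fromEdgeSet {s(E, F)}) :
    ∀ A : V,
      gainMax G G' A = max 0 (|(G.dist A F : ℤ) - (G.dist A E : ℤ)| - 1) ∧
      (A ∈ normalRegion G G' ↔ gainMax G G' A = 0) ∧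
      (A ∈ specialRegion G G' E →
        gainMax G G' A = gain G G' A E ∧
        gain G G' A E = (G.dist A E : ℤ) - (1 + (G.dist A F : ℤ))) := by
  subst hG'
  intro A
  set G' := G ⊔ SimpleGraph.fromEdgeSet {s(E, F)} with hG'
  have hd' : ∀ X Y : V, G'.dist X Y =
      min (G.dist X Y) (min (G.dist X E + 1 + G.dist F Y) (G.dist X F + 1 + G.dist E Y)) :=
    dist'_eq hconn hne
  set dE := G.dist A E with hdE
  set dF := G.dist A F with hdF
  -- every gain is bounded above
  have hub : ∀ X : V, gain G G' A X ≤ max 0 (|(dF : ℤ) - (dE : ℤ)| - 1) := by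
    intro X
    have h1 : G.dist A X ≤ G.dist A F + G.dist F X := hconn.dist_triangle
    have h2 : G.dist A X ≤ G.dist A E + G.dist E X := hconn.dist_triangle
    have h3 := hd' A X
    unfold gain
    rw [h3]
    rcases abs_cases ((dF : ℤ) - (dE : ℤ)) with ⟨he, _⟩ | ⟨he, _⟩ <;> rw [he] <;>
      · simp only [le_max_iff]
        push_cast
        omega
  -- achieved lower bounds
  have hAA : gain G G' A A = 0 := by
    unfold gain
    rw [hd' A A]
    simp [SimpleGraph.dist_self]
  have hAE : gain G G' A E ≥ (dE : ℤ) - (dF : ℤ) - 1 := by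
    have key : G'.dist A E ≤ G.dist A F + 1 := by
      rw [hd' A E, SimpleGraph.dist_self]
      simpa using le_trans (min_le_right _ _) (min_le_right _ _)
    unfold gain
    omega
  have hAF : gain G G' A F ≥ (dF : ℤ) - (dE : ℤ) - 1 := by
    have key : G'.dist A F ≤ G.dist A E + 1 := by
      rw [hd' A F, SimpleGraph.dist_self]
      simpa using le_trans (min_le_right _ _) (min_le_left _ _)
    unfold gain
    omega
  have hmain : gainMax G G' A = max 0 (|(dF : ℤ) - (dE : ℤ)| - 1) := by
    apply le_antisymm
    · exact Finset.sup'_le _ _ fun X _ => hub X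
    · have l0 := Finset.le_sup' (fun X => gain G G' A X) (Finset.mem_univ A)
      have l1 := Finset.le_sup' (fun X => gain G G' A X) (Finset.mem_univ E)
      have l2 := Finset.le_sup' (fun X => gain G G' A X) (Finset.mem_univ F)
      rw [hAA] at l0
      rcases abs_cases ((dF : ℤ) - (dE : ℤ)) with ⟨he, _⟩ | ⟨he, _⟩ <;> rw [he] <;>
        · simp only [max_le_iff, gainMax] at *
          omega
  refine ⟨hmain, ?_, ?_⟩
  · -- normal region iff
    have hle' : ∀ Z : V, G'.dist Z A ≤ G.dist Z A := by
      intro Z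
      rw [hd' Z A]
      omega
    constructor
    · intro hN
      have : ∀ X : V, gain G G' A X ≤ 0 := by
        intro X
        have hX : X ∉ specialRegion G G' A := by
          rw [hN]; exact Set.notMem_empty X
        simp only [specialRegion, Set.mem_setOf_eq, not_lt] at hX
        unfold gain
        rw [SimpleGraph.dist_comm (u := A) (v := X),
          SimpleGraph.dist_comm (G := G') (u := A) (v := X)]
        omega
      have h1 : gainMax G G' A ≤ 0 := Finset.sup'_le _ _ fun X _ => this X
      have h2 : (0 : ℤ) ≤ gainMax G G' A := by
        have := Finset.le_sup' (fun X => gain G G' A X) (Finset.mem_univ A)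
        rw [hAA] at this
        exact this
      omega
    · intro h0
      ext Z
      simp only [specialRegion, Set.mem_setOf_eq, Set.mem_empty_iff_false, iff_false, not_lt]
      have := Finset.le_sup' (fun X => gain G G' A X) (Finset.mem_univ Z)
      rw [show Finset.univ.sup' Finset.univ_nonempty (fun X => gain G G' A X)
        = gainMax G G' A from rfl, h0] at this
      simp only [gain] at this
      rw [SimpleGraph.dist_comm (u := Z) (v := A),
        SimpleGraph.dist_comm (G := G') (u := Z) (v := A)]
      omega
  · -- special region of E
    intro hA
    simp only [specialRegion, Set.mem_setOf_eq] at hA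
    rw [hd' A E, SimpleGraph.dist_self] at hA
    have hlt : dF + 1 < dE := by omega
    have hEg : gain G G' A E = (dE : ℤ) - (1 + (dF : ℤ)) := by
      unfold gain
      rw [hd' A E, SimpleGraph.dist_self]
      push_cast
      omega
    refine ⟨?_, hEg⟩
    rw [hmain, hEg]
    have habs : |(dF : ℤ) - (dE : ℤ)| = (dE : ℤ) - (dF : ℤ) := by
      rw [abs_sub_comm]
      exact abs_of_nonneg (by push_cast; omega)
    rw [habs, max_eq_right (by push_cast; omega : (0 : ℤ) ≤ (dE : ℤ) - (dF : ℤ) - 1)]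
    push_cast
    omega
end

section
/- For every integer n > 1, the graph G* has metric dimension at most ⌈log₂(n)⌉ + 1; indeed, the set S* consisting of all ⌈log₂(n)⌉ level-0 vertices together with the vertex F is a resolving set of G*. -/
/-- A set `R` of vertices resolves the graph `H` if every pair of distinct
vertices is distinguished by some vertex of `R`. -/
def resolves {V : Type*} (H : SimpleGraph V) (R : Set V) : Prop :=
  ∀ a b : V, a ≠ b → ∃ x ∈ R, H.dist a x ≠ H.dist b x

/-- The metric dimension: the least cardinality of a (finite) resolving set. -/
noncomputable def metricDim {V : Type*} (H : SimpleGraph V) : ℕ :=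
  sInf {k | ∃ R : Finset V, R.card = k ∧ resolves H (R : Set V)}

/-- The vertices of the graph `G*`: `⌈log₂ n⌉` level-0 vertices, levels 1–3 with
`n − 1` vertices each (`mid l i` is the vertex of level `l+1` with index `i+1`),
and the two special vertices `E` and `F`. -/
inductive GStarV (n : ℕ) where
  | lvl0 (j : Fin (Nat.clog 2 n))
  | mid (l : Fin 3) (i : Fin (n - 1))
  | E
  | F
  deriving DecidableEq

/-- The (asymmetric) edge relation of `G*`: `F` is joined to every level-0 vertex;
the level-0 vertex `j` is joined to the level-1 vertex of index `i` iff the `j`-th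
bit of the binary representation of `i` is 1; consecutive mid levels are joined at
equal indices; and every level-3 vertex is joined to `E`. -/
def gstarRel (n : ℕ) : GStarV n → GStarV n → Prop
  | .F, .lvl0 _ => True
  | .lvl0 j, .mid l i => (l : ℕ) = 0 ∧ Nat.testBit (i + 1) j = true
  | .mid l i, .mid l' i' => i = i' ∧ (l' : ℕ) = (l : ℕ) + 1
  | .mid l _, .E => (l : ℕ) = 2
  | _, _ => False

/-- The graph `G*`. -/
def GStar (n : ℕ) : SimpleGraph (GStarV n) where
  Adj a b := gstarRel n a b ∨ gstarRel n b a
  symm := ⟨fun _ _ h => Or.symm h⟩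
  loopless := ⟨by
    rintro a (h | h) <;> cases a <;> simp [gstarRel] at h⟩

/-!
The distance from `F` is the level of a vertex (`0` for `F`, `1` for level 0, …, `5` for `E`),
so `F` separates vertices of different levels. Two level-0 vertices are separated by either of
them. On a middle level `l`, the distance from `v^(0)_j` to the vertex of index `i` is `l + 1` or
`l + 3` according to whether bit `j` of `i` is set, so the level-0 vertices read off the binary
expansion of `i`. Each distance is computed by exhibiting a walk and a potential that vanishes at
the landmark and grows by at most one along every edge.
-/

theorem Nat.exists_lt_testBit_ne {x y k : ℕ} (hx : x < 2 ^ k) (hy : y < 2 ^ k) (h : x ≠ y) :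
    ∃ j < k, x.testBit j ≠ y.testBit j := by
  obtain ⟨j, hj⟩ := Nat.exists_testBit_ne_of_ne h
  refine ⟨j, lt_of_not_ge fun hkj => hj ?_, hj⟩
  have hpow : 2 ^ k ≤ 2 ^ j := Nat.pow_le_pow_right two_pos hkj
  rw [Nat.testBit_lt_two_pow (hx.trans_le hpow), Nat.testBit_lt_two_pow (hy.trans_le hpow)]

theorem Nat.exists_lt_testBit {x k : ℕ} (hx : x < 2 ^ k) (h : x ≠ 0) :
    ∃ j < k, x.testBit j = true := by
  simpa using Nat.exists_lt_testBit_ne hx (Nat.two_pow_pos k) h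

namespace SimpleGraph

variable {V : Type*} {G : SimpleGraph V} {f : V → ℕ}

theorem Walk.le_add_length_of_adj (hf : ∀ a b, G.Adj a b → f b ≤ f a + 1) {u v : V}
    (p : G.Walk u v) : f v ≤ f u + p.length := by
  induction p with
  | nil => simp
  | cons h p ih =>
    have := hf _ _ h
    rw [Walk.length_cons]
    omega

theorem dist_eq_of_adj_le (hf : ∀ a b, G.Adj a b → f b ≤ f a + 1) {u v : V} (hu : f u = 0)
    (p : G.Walk u v) (hp : p.length ≤ f v) : G.dist u v = f v := by
  obtain ⟨q, hq⟩ := p.reachable.exists_walk_length_eq_dist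
  have := q.le_add_length_of_adj hf
  have := G.dist_le p
  omega

end SimpleGraph

theorem metricDim_le_card {V : Type*} {H : SimpleGraph V} {R : Finset V}
    (h : resolves H (R : Set V)) : metricDim H ≤ R.card :=
  Nat.sInf_le ⟨R, rfl, h⟩

namespace GStar

open SimpleGraph

variable {n : ℕ}

theorem val_add_one_lt_two_pow_clog (i : Fin (n - 1)) : (i : ℕ) + 1 < 2 ^ Nat.clog 2 n := by
  have := Nat.le_pow_clog one_lt_two n
  omega

theorem adj_F_lvl0 (j : Fin (Nat.clog 2 n)) : (GStar n).Adj .F (.lvl0 j) := Or.inl trivial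

theorem adj_lvl0_mid {j : Fin (Nat.clog 2 n)} {i : Fin (n - 1)}
    (hb : Nat.testBit (i + 1) j = true) : (GStar n).Adj (.lvl0 j) (.mid 0 i) :=
  Or.inl ⟨rfl, hb⟩

theorem adj_mid_succ (l : Fin 2) (i : Fin (n - 1)) :
    (GStar n).Adj (.mid l.castSucc i) (.mid l.succ i) :=
  Or.inl ⟨rfl, rfl⟩

theorem adj_mid_E (i : Fin (n - 1)) : (GStar n).Adj (.mid 2 i) .E := Or.inl rfl

theorem le_succ_of_adj {f : GStarV n → ℕ}
    (hf : ∀ a b, gstarRel n a b → f b ≤ f a + 1 ∧ f a ≤ f b + 1) :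
    ∀ a b, (GStar n).Adj a b → f b ≤ f a + 1
  | a, b, .inl h => (hf a b h).1
  | a, b, .inr h => (hf b a h).2

theorem exists_walk_lvl0_mid {j : Fin (Nat.clog 2 n)} {i : Fin (n - 1)} (l : Fin 3)
    (hb : Nat.testBit (i + 1) j = true) :
    ∃ p : (GStar n).Walk (.lvl0 j) (.mid l i), p.length = l + 1 := by
  have h0 := adj_lvl0_mid hb
  have h1 := adj_mid_succ 0 i
  have h2 := adj_mid_succ 1 i
  fin_cases l
  exacts [⟨.cons h0 .nil, rfl⟩, ⟨.cons h0 (.cons h1 .nil), rfl⟩,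
    ⟨.cons h0 (.cons h1 (.cons h2 .nil)), rfl⟩]

def distF : GStarV n → ℕ
  | .F => 0
  | .lvl0 _ => 1
  | .mid l _ => l + 2
  | .E => 5

def distLvl0 (j : Fin (Nat.clog 2 n)) : GStarV n → ℕ
  | .F => 1
  | .lvl0 j' => if j' = j then 0 else 2
  | .mid l i => if Nat.testBit (i + 1) j then l + 1 else l + 3
  | .E => 4

theorem distF_le_succ_of_adj : ∀ a b : GStarV n, (GStar n).Adj a b → distF b ≤ distF a + 1 :=
  le_succ_of_adj fun a b h => by
    cases a <;> cases b <;> simp only [gstarRel] at h <;> simp only [distF] <;> omega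

theorem distLvl0_le_succ_of_adj (j : Fin (Nat.clog 2 n)) :
    ∀ a b : GStarV n, (GStar n).Adj a b → distLvl0 j b ≤ distLvl0 j a + 1 :=
  le_succ_of_adj fun a b h => by
    cases a <;> cases b <;> simp only [gstarRel] at h <;> simp only [distLvl0] <;>
      split_ifs <;> simp_all

theorem dist_F (hn : 1 < n) (v : GStarV n) : (GStar n).dist .F v = distF v := by
  obtain ⟨p, hp⟩ : ∃ p : (GStar n).Walk .F v, p.length = distF v := by
    cases v with
    | F => exact ⟨.nil, rfl⟩
    | lvl0 j => exact ⟨.cons (adj_F_lvl0 j) .nil, rfl⟩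
    | mid l i =>
      obtain ⟨j, hj, hb⟩ := Nat.exists_lt_testBit (val_add_one_lt_two_pow_clog i) i.val.succ_ne_zero
      obtain ⟨q, hq⟩ := exists_walk_lvl0_mid (j := ⟨j, hj⟩) l hb
      exact ⟨.cons (adj_F_lvl0 _) q, by simp [hq, distF]⟩
    | E =>
      let i : Fin (n - 1) := ⟨0, by omega⟩
      obtain ⟨j, hj, hb⟩ := Nat.exists_lt_testBit (val_add_one_lt_two_pow_clog i) i.val.succ_ne_zero
      obtain ⟨q, hq⟩ := exists_walk_lvl0_mid (j := ⟨j, hj⟩) 2 hb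
      exact ⟨.cons (adj_F_lvl0 _) (q.concat (adj_mid_E i)), by simp [hq, distF]⟩
  exact dist_eq_of_adj_le distF_le_succ_of_adj rfl p hp.le

theorem dist_lvl0 (j : Fin (Nat.clog 2 n)) (v : GStarV n) :
    (GStar n).dist (.lvl0 j) v = distLvl0 j v := by
  have hF := (adj_F_lvl0 j).symm
  obtain ⟨p, hp⟩ : ∃ p : (GStar n).Walk (.lvl0 j) v, p.length ≤ distLvl0 j v := by
    cases v with
    | F => exact ⟨.cons hF .nil, le_rfl⟩
    | lvl0 j' =>
      by_cases h : j' = j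
      · subst h
        exact ⟨.nil, Nat.zero_le _⟩
      · exact ⟨.cons hF (.cons (adj_F_lvl0 j') .nil), by simp [distLvl0, h]⟩
    | mid l i =>
      by_cases hb : Nat.testBit (i + 1) j = true
      · obtain ⟨q, hq⟩ := exists_walk_lvl0_mid l hb
        exact ⟨q, by simp [hq, hb, distLvl0]⟩
      · obtain ⟨j', hj', hb'⟩ := Nat.exists_lt_testBit (val_add_one_lt_two_pow_clog i) i.val.succ_ne_zero
        obtain ⟨q, hq⟩ := exists_walk_lvl0_mid (j := ⟨j', hj'⟩) l hb'
        exact ⟨.cons hF (.cons (adj_F_lvl0 _) q), by simp [hq, hb, distLvl0]⟩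
    | E =>
      have hj : 2 ^ (j : ℕ) < n := Nat.pow_lt_of_lt_clog j.isLt
      let i : Fin (n - 1) := ⟨2 ^ (j : ℕ) - 1, by have := @Nat.one_le_two_pow j; omega⟩
      have hb : Nat.testBit (i + 1) j = true := by
        simp [i, Nat.sub_add_cancel Nat.one_le_two_pow]
      obtain ⟨q, hq⟩ := exists_walk_lvl0_mid 2 hb
      exact ⟨q.concat (adj_mid_E i), by simp [hq, distLvl0]⟩
  exact dist_eq_of_adj_le (distLvl0_le_succ_of_adj j) (by simp [distLvl0]) p hp

theorem eq_of_distF_eq_of_distLvl0_eq {a b : GStarV n} (hF : distF a = distF b)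
    (h0 : ∀ j, distLvl0 j a = distLvl0 j b) : a = b := by
  cases a <;> cases b <;> simp only [distF, reduceCtorEq] at hF ⊢ <;> try omega
  case lvl0.lvl0 j j' => simpa [distLvl0, eq_comm] using h0 j
  case mid.mid l i l' i' =>
    obtain rfl : l = l' := Fin.ext (by omega)
    refine congrArg _ (Fin.ext (Nat.succ_injective (by_contra fun hne => ?_)))
    obtain ⟨j, hj, hbit⟩ :=
      Nat.exists_lt_testBit_ne (val_add_one_lt_two_pow_clog i) (val_add_one_lt_two_pow_clog i') hne
    have := h0 ⟨j, hj⟩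
    cases hb : Nat.testBit (i + 1) j <;> cases hb' : Nat.testBit (i' + 1) j <;>
      simp_all [distLvl0]

theorem resolves_lvl0_F (hn : 1 < n) :
    resolves (GStar n) {v : GStarV n | (∃ j, v = GStarV.lvl0 j) ∨ v = GStarV.F} := by
  intro a b hab
  by_contra! h
  refine hab (eq_of_distF_eq_of_distLvl0_eq ?_ fun j => ?_)
  · have := h .F (Or.inr rfl)
    rwa [SimpleGraph.dist_comm, dist_F hn, SimpleGraph.dist_comm, dist_F hn] at this
  · have := h (.lvl0 j) (Or.inl ⟨j, rfl⟩)
    rwa [SimpleGraph.dist_comm, dist_lvl0, SimpleGraph.dist_comm, dist_lvl0] at this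

def landmarks (n : ℕ) : Finset (GStarV n) :=
  insert .F (Finset.univ.image .lvl0)

theorem coe_landmarks :
    (landmarks n : Set (GStarV n)) = {v | (∃ j, v = GStarV.lvl0 j) ∨ v = GStarV.F} := by
  ext v
  simp [landmarks, eq_comm, or_comm]

theorem card_landmarks : (landmarks n).card = Nat.clog 2 n + 1 := by
  rw [landmarks, Finset.card_insert_of_notMem (by simp),
    Finset.card_image_of_injective _ fun _ _ => GStarV.lvl0.inj, Finset.card_univ,
    Fintype.card_fin]

end GStar

open GStar in
/-- Claim 4: for every `n > 1`, the set `S* = {level-0 vertices} ∪ {F}` is a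
resolving set of `G*`; consequently `β(G*) ≤ ⌈log₂ n⌉ + 1`. -/
theorem stmt_5 (n : ℕ) (hn : 1 < n) :
    resolves (GStar n) {v : GStarV n | (∃ j, v = GStarV.lvl0 j) ∨ v = GStarV.F} ∧
    metricDim (GStar n) ≤ Nat.clog 2 n + 1 := by
  refine ⟨resolves_lvl0_F hn, ?_⟩
  calc metricDim (GStar n) ≤ (landmarks n).card :=
        metricDim_le_card (coe_landmarks ▸ resolves_lvl0_F hn)
    _ = Nat.clog 2 n + 1 := card_landmarks
end

section
/- Let G be the m×n rectangle grid graph with corners P = (1,1), Q = (n,1), R = (n,m), S = (1,m), and let G' be G with an extra edge e between E = (x_E, y_E) and F = (x_F, y_F) with d_G(E,F) ≥ 2, where x_F ≤ x_E, y_E ≤ y_F, and x_E − x_F ≤ y_F − y_E. If A lies in the special region R_Q and B lies in the special region R_S, then d_{G'}(A,Q) ≠ d_{G'}(B,Q) or d_{G'}(A,S) ≠ d_{G'}(B,S); similarly, if A ∈ R_P and B ∈ R_R, then A and B are distinguished by P or by R. -/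
/-- The rectangle grid graph with `n` columns and `m` rows: the vertex `(i, j)`
(with `i : Fin n`, `j : Fin m`) represents the grid point in column `i + 1` and row
`j + 1`; two vertices are adjacent when they differ by exactly 1 in exactly one
coordinate, i.e. when their ℓ¹ distance is 1. -/
def grid2 (n m : ℕ) : SimpleGraph (Fin n × Fin m) where
  Adj a b := |((a.1 : ℕ) : ℤ) - ((b.1 : ℕ) : ℤ)| + |((a.2 : ℕ) : ℤ) - ((b.2 : ℕ) : ℤ)| = 1
  symm := by
    constructor
    intro a b h
    rw [abs_sub_comm ((b.1 : ℕ) : ℤ), abs_sub_comm ((b.2 : ℕ) : ℤ)]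
    exact h
  loopless := by constructor; intro a h; simp at h

/-!
In the grid the corners `Q, S` are antipodal: `d(Z, Q) + d(Z, S) = (n - 1) + (m - 1)` for every
`Z`, and likewise `P, R`. The hypotheses on `E, F` make `E` at least as close as `F` to `Q` and to
`P`. Adding the edge `EF` to a graph changes a distance `d(u, v)` into
`min (d(u, v), d(u, E) + 1 + d(F, v), d(u, F) + 1 + d(E, v))`, so a vertex `A` whose distance to
`Q` drops reaches `Q` along `A → F → E → Q`, and a vertex `B` whose distance to `S` drops reaches
`S` along `B → E → F → S`. If `A` and `B` had the same new distances to `Q` and to `S`, the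
triangle inequality through `F` for `A` and through `E` for `B` would bound `d(A, Q) + d(B, Q)`
below by `d(E, Q) + d(F, Q) + 1` and above by `d(E, Q) + d(F, Q) - 1`.
-/

namespace SimpleGraph

variable {V : Type*} {G : SimpleGraph V}

lemma Walk.le_add_length_of_forall_adj {f : V → ℕ} (hf : ∀ u v, G.Adj u v → f u ≤ f v + 1)
    {u v : V} (w : G.Walk u v) : f u ≤ f v + w.length := by
  induction w with
  | nil => simp
  | cons hadj _ ih =>
    rw [Walk.length_cons]
    have := hf _ _ hadj
    omega

lemma Reachable.le_add_dist_of_forall_adj {f : V → ℕ}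
    (hf : ∀ u v, G.Adj u v → f u ≤ f v + 1) {u v : V} (h : G.Reachable u v) :
    f u ≤ f v + G.dist u v := by
  obtain ⟨w, hw⟩ := h.exists_walk_length_eq_dist
  exact hw ▸ w.le_add_length_of_forall_adj hf

lemma Preconnected.dist_sup_edge (hG : G.Preconnected) (E F u v : V) :
    (G ⊔ fromEdgeSet {s(E, F)}).dist u v =
      min (G.dist u v) (min (G.dist u E + 1 + G.dist F v) (G.dist u F + 1 + G.dist E v)) := by
  set G' := G ⊔ fromEdgeSet {s(E, F)}
  have hGG' : G ≤ G' := le_sup_left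
  have hG' : G'.Preconnected := hG.mono hGG'
  have hd {a b : V} : G'.dist a b ≤ G.dist a b := (hG a b).dist_anti hGG'
  have hEF : G'.dist E F ≤ 1 := by
    rcases eq_or_ne E F with rfl | hne
    · simp
    · exact (dist_eq_one_iff_adj.2 (Or.inr ⟨rfl, hne⟩ : G'.Adj E F)).le
  refine le_antisymm (le_min hd (le_min ?_ ?_)) ?_
  · have h1 := (hG' u E).dist_triangle_left F
    have h2 := (hG' u F).dist_triangle_left v
    have h3 : G'.dist u E ≤ _ := hd
    have h4 : G'.dist F v ≤ _ := hd
    omega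
  · have h1 := (hG' u F).dist_triangle_left E
    have h2 := (hG' u E).dist_triangle_left v
    have h3 : G'.dist u F ≤ _ := hd
    have h4 : G'.dist E v ≤ _ := hd
    rw [dist_comm] at hEF
    omega
  -- The right-hand side, as a function of `u`, vanishes at `v` and is 1-Lipschitz along `G'`.
  · refine (hG' u v).le_add_dist_of_forall_adj (f := fun a ↦ min (G.dist a v)
      (min (G.dist a E + 1 + G.dist F v) (G.dist a F + 1 + G.dist E v))) ?_ |>.trans
      (by simp)
    rintro a b (hab | ⟨hab, -⟩)
    · have h1 := hab.reachable.dist_triangle_left v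
      have h2 := hab.reachable.dist_triangle_left E
      have h3 := hab.reachable.dist_triangle_left F
      rw [dist_eq_one_iff_adj.2 hab] at h1 h2 h3
      omega
    · rcases Sym2.eq_iff.1 hab with ⟨rfl, rfl⟩ | ⟨rfl, rfl⟩ <;> simp only [dist_self] <;> omega

lemma Preconnected.dist_sup_edge_of_mem_specialRegion (hG : G.Preconnected) {E F X Z : V}
    (hX : G.dist E X ≤ G.dist F X)
    (hZ : Z ∈ specialRegion G (G ⊔ fromEdgeSet {s(E, F)}) X) :
    (G ⊔ fromEdgeSet {s(E, F)}).dist Z X = G.dist Z F + 1 + G.dist E X := by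
  have hZE := (hG Z E).dist_triangle_left X
  simp only [specialRegion, Set.mem_ofPred_eq, hG.dist_sup_edge] at hZ ⊢
  omega

theorem Preconnected.dist_ne_or_dist_ne_of_mem_specialRegion (hG : G.Preconnected)
    {E F P R : V} {D : ℕ} (hPR : ∀ Z, G.dist Z P + G.dist Z R = D)
    (hEF : G.dist E P ≤ G.dist F P) {A B : V}
    (hA : A ∈ specialRegion G (G ⊔ fromEdgeSet {s(E, F)}) P)
    (hB : B ∈ specialRegion G (G ⊔ fromEdgeSet {s(E, F)}) R) :
    (G ⊔ fromEdgeSet {s(E, F)}).dist A P ≠ (G ⊔ fromEdgeSet {s(E, F)}).dist B P ∨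
      (G ⊔ fromEdgeSet {s(E, F)}).dist A R ≠ (G ⊔ fromEdgeSet {s(E, F)}).dist B R := by
  have hswap : G ⊔ fromEdgeSet {s(F, E)} = G ⊔ fromEdgeSet {s(E, F)} := by rw [Sym2.eq_swap]
  have hAP := hG.dist_sup_edge_of_mem_specialRegion hEF hA
  have hBR := hG.dist_sup_edge_of_mem_specialRegion (E := F) (F := E)
    (by linarith [hPR E, hPR F]) (hswap ▸ hB)
  rw [hswap] at hBR
  have hAR := (hG A R).dist_anti (le_sup_left : G ≤ G ⊔ fromEdgeSet {s(E, F)})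
  have hBP := (hG B P).dist_anti (le_sup_left : G ≤ G ⊔ fromEdgeSet {s(E, F)})
  have hFP := (hG F A).dist_triangle_left P
  have hBEP := (hG B E).dist_triangle_left P
  have hAF : G.dist A F = G.dist F A := dist_comm
  have := hPR A; have := hPR B; have := hPR E; have := hPR F
  omega

lemma pathGraph_dist_le_of_add_eq {n : ℕ} :
    ∀ (k : ℕ) (i j : Fin n), (i : ℕ) + k = j → (pathGraph n).dist i j ≤ k
  | 0, i, j, h => by simp [Fin.ext h]
  | k + 1, i, j, h => by
    let j' : Fin n := ⟨i + k, by omega⟩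
    have hadj : (pathGraph n).Adj j' j := pathGraph_adj.2 (.inl (by simp [j']; omega))
    calc (pathGraph n).dist i j ≤ (pathGraph n).dist i j' + (pathGraph n).dist j' j :=
          hadj.reachable.dist_triangle_right i
      _ ≤ k + 1 :=
          add_le_add (pathGraph_dist_le_of_add_eq k i j' rfl) (dist_eq_one_iff_adj.2 hadj).le

lemma pathGraph_dist {n : ℕ} (i j : Fin n) :
    (pathGraph n).dist i j = (((i : ℕ) : ℤ) - (j : ℕ)).natAbs := by
  refine le_antisymm ?_ ?_
  · rcases le_total i j with hij | hij
    · exact pathGraph_dist_le_of_add_eq (j - i : ℕ) i j (by omega) |>.trans (by omega)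
    · rw [dist_comm]
      exact pathGraph_dist_le_of_add_eq (i - j : ℕ) j i (by omega) |>.trans (by omega)
  · have := (pathGraph_preconnected n i j).le_add_dist_of_forall_adj
      (f := fun x : Fin n ↦ (((x : ℕ) : ℤ) - (j : ℕ)).natAbs)
      fun x y hxy ↦ by rw [pathGraph_adj] at hxy; omega
    simpa using this

end SimpleGraph

open SimpleGraph

lemma grid2_eq_boxProd (n m : ℕ) : grid2 n m = pathGraph n □ pathGraph m := by
  ext a b
  simp only [grid2, boxProd_adj, pathGraph_adj, Int.abs_eq_natAbs, Fin.ext_iff]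
  omega

lemma grid2_preconnected (n m : ℕ) : (grid2 n m).Preconnected := by
  rw [grid2_eq_boxProd]
  exact (pathGraph_preconnected n).boxProd (pathGraph_preconnected m)

lemma grid2_dist {n m : ℕ} (a b : Fin n × Fin m) :
    (grid2 n m).dist a b =
      (((a.1 : ℕ) : ℤ) - (b.1 : ℕ)).natAbs + (((a.2 : ℕ) : ℤ) - (b.2 : ℕ)).natAbs := by
  have h := (grid2_preconnected n m a b).coe_dist_eq_edist
  rw [grid2_eq_boxProd, edist_boxProd, ← (pathGraph_preconnected n _ _).coe_dist_eq_edist,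
    ← (pathGraph_preconnected m _ _).coe_dist_eq_edist, pathGraph_dist, pathGraph_dist] at h
  rw [grid2_eq_boxProd]
  exact_mod_cast h

theorem stmt_13_general {m n : ℕ} (hn : 0 < n) (hm : 0 < m)
    (E F : Fin n × Fin m)
    (h1 : ((F.1 : ℕ) : ℤ) ≤ ((E.1 : ℕ) : ℤ))
    (h3 : ((E.1 : ℕ) : ℤ) - ((F.1 : ℕ) : ℤ) ≤ ((F.2 : ℕ) : ℤ) - ((E.2 : ℕ) : ℤ))
    (G' : SimpleGraph (Fin n × Fin m))
    (hG' : G' = grid2 n m ⊔ SimpleGraph.fromEdgeSet {s(E, F)}) :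
    let P : Fin n × Fin m := (⟨0, hn⟩, ⟨0, hm⟩)
    let Q : Fin n × Fin m := (⟨n - 1, Nat.sub_lt hn one_pos⟩, ⟨0, hm⟩)
    let R : Fin n × Fin m := (⟨n - 1, Nat.sub_lt hn one_pos⟩, ⟨m - 1, Nat.sub_lt hm one_pos⟩)
    let S : Fin n × Fin m := (⟨0, hn⟩, ⟨m - 1, Nat.sub_lt hm one_pos⟩)
    (∀ A B : Fin n × Fin m,
      A ∈ specialRegion (grid2 n m) G' Q → B ∈ specialRegion (grid2 n m) G' S →
      (G'.dist A Q ≠ G'.dist B Q ∨ G'.dist A S ≠ G'.dist B S)) ∧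
    (∀ A B : Fin n × Fin m,
      A ∈ specialRegion (grid2 n m) G' P → B ∈ specialRegion (grid2 n m) G' R →
      (G'.dist A P ≠ G'.dist B P ∨ G'.dist A R ≠ G'.dist B R)) := by
  subst hG'
  intro P Q R S
  have hQS : ∀ Z, (grid2 n m).dist Z Q + (grid2 n m).dist Z S = n - 1 + (m - 1) := by
    intro Z; simp only [grid2_dist, Q, S]; omega
  have hPR : ∀ Z, (grid2 n m).dist Z P + (grid2 n m).dist Z R = n - 1 + (m - 1) := by
    intro Z; simp only [grid2_dist, P, R]; omega
  have hEQ : (grid2 n m).dist E Q ≤ (grid2 n m).dist F Q := by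
    simp only [grid2_dist, Q]; omega
  have hEP : (grid2 n m).dist E P ≤ (grid2 n m).dist F P := by
    simp only [grid2_dist, P]; omega
  have hG := grid2_preconnected n m
  exact ⟨fun _ _ ↦ hG.dist_ne_or_dist_ne_of_mem_specialRegion hQS hEQ,
    fun _ _ ↦ hG.dist_ne_or_dist_ne_of_mem_specialRegion hPR hEP⟩

/-- Claim 7: on the `m × n` grid with extra edge `e = (E,F)` satisfying the
symmetry-breaking assumption (`x_F ≤ x_E`, `y_E ≤ y_F`, `x_E − x_F ≤ y_F − y_E`) and
`d_G(E,F) ≥ 2`: if `A ∈ R_Q` and `B ∈ R_S` then `A` and `B` are distinguished by the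
opposite corners `Q` or `S`; similarly if `A ∈ R_P` and `B ∈ R_R` then they are
distinguished by `P` or `R`. -/
theorem stmt_13 {m n : ℕ} (hn : 0 < n) (hm : 0 < m)
    (E F : Fin n × Fin m)
    (hdist : 2 ≤ (grid2 n m).dist E F)
    (h1 : ((F.1 : ℕ) : ℤ) ≤ ((E.1 : ℕ) : ℤ))
    (h2 : ((E.2 : ℕ) : ℤ) ≤ ((F.2 : ℕ) : ℤ))
    (h3 : ((E.1 : ℕ) : ℤ) - ((F.1 : ℕ) : ℤ) ≤ ((F.2 : ℕ) : ℤ) - ((E.2 : ℕ) : ℤ))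
    (G' : SimpleGraph (Fin n × Fin m))
    (hG' : G' = grid2 n m ⊔ SimpleGraph.fromEdgeSet {s(E, F)}) :
    let P : Fin n × Fin m := (⟨0, hn⟩, ⟨0, hm⟩)
    let Q : Fin n × Fin m := (⟨n - 1, Nat.sub_lt hn one_pos⟩, ⟨0, hm⟩)
    let R : Fin n × Fin m := (⟨n - 1, Nat.sub_lt hn one_pos⟩, ⟨m - 1, Nat.sub_lt hm one_pos⟩)
    let S : Fin n × Fin m := (⟨0, hn⟩, ⟨m - 1, Nat.sub_lt hm one_pos⟩)
    (∀ A B : Fin n × Fin m,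
      A ∈ specialRegion (grid2 n m) G' Q → B ∈ specialRegion (grid2 n m) G' S →
      (G'.dist A Q ≠ G'.dist B Q ∨ G'.dist A S ≠ G'.dist B S)) ∧
    (∀ A B : Fin n × Fin m,
      A ∈ specialRegion (grid2 n m) G' P → B ∈ specialRegion (grid2 n m) G' R →
      (G'.dist A P ≠ G'.dist B P ∨ G'.dist A R ≠ G'.dist B R)) :=
  stmt_13_general hn hm E F h1 h3 G' hG'
end

section
/- Let G be the m×n rectangle grid graph and let G' be G with an extra edge e between E = (x_E, y_E) and F = (x_F, y_F) with d_G(E,F) ≥ 2. For any two vertices A, B, if Gain(A,B) > 0 then Gain(A,B) has the same parity as Gain = |y_F − y_E| + |x_E − x_F| − 1 and as Gain' = ||y_F − y_E| − |x_E − x_F|| − 1. -/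
/-!
Colour the grid by the parity of `x + y`; this is a proper 2-colouring `c`, so every walk of `G`
from `A` to `B` has length `≡ c A + c B (mod 2)`, and in `G'` each traversal of the extra edge
shifts that parity by `c E + c F + 1`. A positive gain forces a shortest `A`–`B` path of `G'` to use
the extra edge exactly once, so the gain is `≡ c E + c F + 1 ≡ (y_F − y_E) + (x_E − x_F) − 1`, which
is also the parity of both `Gain` and `Gain'` because `|t| ≡ t (mod 2)`.
-/

namespace SimpleGraph

variable {V : Type*} {G : SimpleGraph V}

lemma Coloring.add_eq_one_of_adj (c : G.Coloring (ZMod 2)) {u v : V} (h : G.Adj u v) :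
    c u + c v = 1 := by
  have := c.valid h
  generalize c u = a, c v = b at this
  revert a b
  decide

lemma Coloring.cast_length_eq_add (c : G.Coloring (ZMod 2)) {u v : V} (p : G.Walk u v) :
    (p.length : ZMod 2) = c u + c v := by
  induction p with
  | nil => simp [CharTwo.add_self_eq_zero]
  | cons h p ih =>
    rw [Walk.length_cons, Nat.cast_succ, ih]
    grind [c.add_eq_one_of_adj h]

lemma Coloring.cast_length_sup_edge_eq [DecidableEq V] (c : G.Coloring (ZMod 2)) {x y u v : V}
    (p : (G ⊔ edge x y).Walk u v) :
    (p.length : ZMod 2) = c u + c v + p.edges.count s(x, y) * (c x + c y + 1) := by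
  induction p with
  | nil => simp [CharTwo.add_self_eq_zero]
  | @cons u w v h p ih =>
    rw [Walk.length_cons, Walk.edges_cons, Nat.cast_succ, ih]
    by_cases he : s(u, w) = s(x, y)
    · have hends : c u + c w = c x + c y := by
        rcases Sym2.eq_iff.mp he with ⟨rfl, rfl⟩ | ⟨rfl, rfl⟩ <;> ring
      rw [he, List.count_cons_self, Nat.cast_succ]
      grind
    · have hG : G.Adj u w := h.resolve_right fun h' ↦ he ((adj_edge _ _).mp h').1.symm
      rw [List.count_cons_of_ne he]
      grind [c.add_eq_one_of_adj hG]

lemma Walk.mem_edgeSet_left_of_notMem_edges [DecidableEq V] {x y u v : V}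
    (p : (G ⊔ edge x y).Walk u v) (hp : s(x, y) ∉ p.edges) : ∀ e ∈ p.edges, e ∈ G.edgeSet := by
  intro e he
  rcases edgeSet_sup G (edge x y) ▸ p.edges_subset_edgeSet he with h | h
  · exact h
  · exact absurd (edgeSet_edge_subset h ▸ he) hp

lemma exists_shortest_walk_count_edges_eq_one [DecidableEq V] {x y u v : V}
    (h : (G ⊔ edge x y).dist u v < G.dist u v) :
    ∃ p : (G ⊔ edge x y).Walk u v,
      p.length = (G ⊔ edge x y).dist u v ∧ p.edges.count s(x, y) = 1 := by
  have hreach : G.Reachable u v := Reachable.of_dist_ne_zero (by omega)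
  obtain ⟨p, hpath, hlen⟩ := (hreach.mono le_sup_left).exists_path_of_dist
  refine ⟨p, hlen, hpath.isTrail.count_edges_eq_one ?_⟩
  by_contra hnot
  have := G.dist_le (p.transfer G (p.mem_edgeSet_left_of_notMem_edges hnot))
  rw [Walk.length_transfer] at this
  omega

theorem Coloring.cast_gain_sup_edge (c : G.Coloring (ZMod 2)) {x y u v : V}
    (h : 0 < gain G (G ⊔ edge x y) u v) :
    (gain G (G ⊔ edge x y) u v : ZMod 2) = c x + c y + 1 := by
  classical
  have hlt : (G ⊔ edge x y).dist u v < G.dist u v := by unfold gain at h; omega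
  obtain ⟨p, hp, hcount⟩ := exists_shortest_walk_count_edges_eq_one hlt
  have hreach : G.Reachable u v := Reachable.of_dist_ne_zero (by omega)
  obtain ⟨q, hq⟩ := hreach.exists_walk_length_eq_dist
  have hp_parity := c.cast_length_sup_edge_eq p
  have hq_parity := c.cast_length_eq_add q
  rw [hp, hcount] at hp_parity
  rw [hq] at hq_parity
  unfold gain
  push_cast
  grind

end SimpleGraph

def gridParity {n m : ℕ} (v : Fin n × Fin m) : ZMod 2 :=
  ((v.1 : ℕ) : ZMod 2) + ((v.2 : ℕ) : ZMod 2)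

lemma gridParity_add_eq_one_of_adj {n m : ℕ} {a b : Fin n × Fin m} (h : (grid2 n m).Adj a b) :
    gridParity a + gridParity b = 1 := by
  have h2 := congrArg (Int.cast : ℤ → ZMod 2) h
  push_cast [ZMod.intCast_abs_mod_two] at h2
  grind [gridParity]

def gridColoring (n m : ℕ) : (grid2 n m).Coloring (ZMod 2) :=
  SimpleGraph.Coloring.mk gridParity fun h hab ↦ by
    simpa [hab, CharTwo.add_self_eq_zero] using gridParity_add_eq_one_of_adj h

theorem stmt_15_general {m n : ℕ}
    (E F : Fin n × Fin m)
    (G' : SimpleGraph (Fin n × Fin m))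
    (hG' : G' = grid2 n m ⊔ SimpleGraph.fromEdgeSet {s(E, F)})
    (A B : Fin n × Fin m) (hpos : 0 < gain (grid2 n m) G' A B) :
    gain (grid2 n m) G' A B % 2 =
      (|((F.2 : ℕ) : ℤ) - ((E.2 : ℕ) : ℤ)| + |((E.1 : ℕ) : ℤ) - ((F.1 : ℕ) : ℤ)| - 1) % 2 ∧
    gain (grid2 n m) G' A B % 2 =
      (|(|((F.2 : ℕ) : ℤ) - ((E.2 : ℕ) : ℤ)|) - (|((E.1 : ℕ) : ℤ) - ((F.1 : ℕ) : ℤ)|)| - 1) % 2 := by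
  rw [hG', ← SimpleGraph.edge] at hpos ⊢
  have hgain := (gridColoring n m).cast_gain_sup_edge hpos
  change _ = gridParity E + gridParity F + 1 at hgain
  constructor <;>
  · apply (ZMod.intCast_eq_intCast_iff' _ _ 2).mp
    push_cast [ZMod.intCast_abs_mod_two]
    rw [hgain]
    grind [gridParity]

/-- Claim 9 (parity): on the `m × n` grid with extra edge `e = (E,F)` with
`d_G(E,F) ≥ 2`, for any two vertices `A`, `B`, if `Gain(A,B) > 0` then `Gain(A,B)`
has the same parity as `Gain = |y_F − y_E| + |x_E − x_F| − 1` and as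
`Gain' = ||y_F − y_E| − |x_E − x_F|| − 1`. -/
theorem stmt_15 {m n : ℕ}
    (E F : Fin n × Fin m)
    (hdist : 2 ≤ (grid2 n m).dist E F)
    (G' : SimpleGraph (Fin n × Fin m))
    (hG' : G' = grid2 n m ⊔ SimpleGraph.fromEdgeSet {s(E, F)})
    (A B : Fin n × Fin m) (hpos : 0 < gain (grid2 n m) G' A B) :
    gain (grid2 n m) G' A B % 2 =
      (|((F.2 : ℕ) : ℤ) - ((E.2 : ℕ) : ℤ)| + |((E.1 : ℕ) : ℤ) - ((F.1 : ℕ) : ℤ)| - 1) % 2 ∧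
    gain (grid2 n m) G' A B % 2 =
      (|(|((F.2 : ℕ) : ℤ) - ((E.2 : ℕ) : ℤ)|) - (|((E.1 : ℕ) : ℤ) - ((F.1 : ℕ) : ℤ)|)| - 1) % 2 :=
  stmt_15_general E F G' hG' A B hpos
end
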